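/- Let G, M, R > 0 and define, for I = (P,E,Y) ∈ (0,∞)×(0,1)×ℝ and θ ∈ ℝ: ρ(I,θ) := RP/(1 + E cos(θ−Y)), W(ρ,θ) := −(GMR²/ρ³)(1 − 3cos²θ), 𝒬_ρ(I,θ) := −(∂W/∂ρ)(ρ(I,θ), θ) and 𝒬_θ(I,θ) := −(∂W/∂θ)(ρ(I,θ), θ). Then the following three identities hold for all such (I,θ): (i) (4π P² / (1 + E cos(θ−Y))²) · (R 𝒬_θ(I,θ)/(GM)) = f^P(I,θ); (ii) (2π P² sin(θ−Y)/(1 + E cos(θ−Y))²) · (R² 𝒬_ρ(I,θ)/(GM)) + π P (3E + 4cos(θ−Y) + E cos(2θ−2Y))/(1 + E cos(θ−Y))² · (R 𝒬_θ(I,θ)/(GM)) = f^E(I,θ); (iii) −(2π P² cos(θ−Y)/(E (1 + E cos(θ−Y))²)) · (R² 𝒬_ρ(I,θ)/(GM)) + (2π P sin(θ−Y)(2 + E cos(θ−Y))/(E (1 + E cos(θ−Y))²)) · (R 𝒬_θ(I,θ)/(GM)) = f^Y(I,θ), where f = (f^P, f^E, f^Y) is the J₂ polar-motion vector field given below. 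-/

import Mathlib

open Real

/-- The `P`-component of the J₂ polar-motion vector field. -/
noncomputable def fP (P E Y θ : ℝ) : ℝ :=
  (6 * π / P) * (E * sin (θ + Y) + 2 * sin (2 * θ) + E * sin (3 * θ - Y))

/-- The `E`-component of the J₂ polar-motion vector field. -/
noncomputable def fE (P E Y θ : ℝ) : ℝ :=
  (3 * π / (8 * P ^ 2)) *
    (E ^ 2 * sin (θ - 3 * Y) + (8 + 2 * E ^ 2) * sin (θ - Y) + (4 + 11 * E ^ 2) * sin (θ + Y)
      + 8 * E * sin (2 * θ - 2 * Y) + 40 * E * sin (2 * θ) + 2 * E ^ 2 * sin (3 * θ - 3 * Y)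
      + (28 + 17 * E ^ 2) * sin (3 * θ - Y) + 24 * E * sin (4 * θ - 2 * Y)
      + 5 * E ^ 2 * sin (5 * θ - 3 * Y))

/-- The `Y`-component of the J₂ polar-motion vector field. -/
noncomputable def fY (P E Y θ : ℝ) : ℝ :=
  - 3 * π / P ^ 2 - (3 * π / (8 * E * P ^ 2)) *
    (E ^ 2 * cos (θ - 3 * Y) + (8 + 6 * E ^ 2) * cos (θ - Y) - (4 - 7 * E ^ 2) * cos (θ + Y)
      + 8 * E * cos (2 * θ - 2 * Y) + 24 * E * cos (2 * θ) + 2 * E ^ 2 * cos (3 * θ - 3 * Y)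
      + (28 + 11 * E ^ 2) * cos (3 * θ - Y) + 24 * E * cos (4 * θ - 2 * Y)
      + 5 * E ^ 2 * cos (5 * θ - 3 * Y))

/-- The quadrupole perturbing potential restricted to a polar plane, in polar coordinates. -/
noncomputable def Wpot (G M R ρ θ : ℝ) : ℝ :=
  -(G * M * R ^ 2 / ρ ^ 3) * (1 - 3 * (cos θ) ^ 2)

/-- The osculating-ellipse radius. -/
noncomputable def ρel (R P E Y θ : ℝ) : ℝ := R * P / (1 + E * cos (θ - Y))

/-- Radial Lagrangian force component `𝒬_ρ = −∂W/∂ρ` evaluated on the osculating ellipse. -/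
noncomputable def Qρ (G M R P E Y θ : ℝ) : ℝ :=
  -deriv (fun r => Wpot G M R r θ) (ρel R P E Y θ)

/-- Angular Lagrangian force component `𝒬_θ = −∂W/∂θ` evaluated on the osculating ellipse. -/
noncomputable def Qθ (G M R P E Y θ : ℝ) : ℝ :=
  -deriv (fun t => Wpot G M R (ρel R P E Y θ) t) θ

/-!
Writing `u = 1 + E cos (θ - Y)`, the ellipse gives `R / ρ = u / P`, so the normalized forces are
`R 𝒬_θ / (GM) = 3 (u/P)³ sin 2θ` and `R² 𝒬_ρ / (GM) = (3/2) (u/P)⁴ (1 + 3 cos 2θ)`.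
In the variables `α = θ - Y` and `β = 2θ` every angle occurring in `f` is `kα ± β` or `kα`.
Expanding these, with `sin 3α = sin α (4 cos² α - 1)`, turns each component of the identity into
an identity of polynomials in `cos α, sin α, cos β, sin β` that holds without using
`sin² + cos² = 1`, both sides being linear in `sin α` and in `(cos β, sin β)`.
-/

lemma sin_three_mul_eq_sin_mul (x : ℝ) : sin (3 * x) = sin x * (4 * cos x ^ 2 - 1) := by
  rw [sin_three_mul]
  linear_combination (-4 * sin x) * sin_sq_add_cos_sq x

lemma one_add_mul_cos_pos {E : ℝ} (hE : |E| < 1) (x : ℝ) : 0 < 1 + E * cos x := by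
  have h : |E * cos x| < 1 := by
    rw [abs_mul]
    exact (mul_le_of_le_one_right (abs_nonneg E) (abs_cos_le_one x)).trans_lt hE
  linarith [neg_abs_le (E * cos x)]

lemma Wpot_eq (G M R ρ θ : ℝ) :
    Wpot G M R ρ θ = G * M * R ^ 2 / 2 * ρ⁻¹ ^ 3 * (1 + 3 * cos (2 * θ)) := by
  rw [Wpot, cos_sq]
  ring

lemma hasDerivAt_Wpot_angle (G M R ρ θ : ℝ) :
    HasDerivAt (fun t => Wpot G M R ρ t) (-(3 * G * M * R ^ 2 * ρ⁻¹ ^ 3 * sin (2 * θ))) θ := by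
  simp only [Wpot_eq]
  refine ((((hasDerivAt_id θ).const_mul 2).cos.const_mul 3).const_add 1 |>.const_mul
    (G * M * R ^ 2 / 2 * ρ⁻¹ ^ 3)).congr_deriv ?_
  simp only [id]
  ring

lemma hasDerivAt_Wpot_radius (G M R θ : ℝ) {ρ : ℝ} (hρ : ρ ≠ 0) :
    HasDerivAt (fun r => Wpot G M R r θ)
      (-(3 / 2 * G * M * R ^ 2 * ρ⁻¹ ^ 4 * (1 + 3 * cos (2 * θ)))) ρ := by
  simp only [Wpot_eq]
  refine (((hasDerivAt_inv hρ).pow 3).const_mul (G * M * R ^ 2 / 2) |>.mul_const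
    (1 + 3 * cos (2 * θ))).congr_deriv ?_
  simp only [inv_pow]
  field_simp
  ring

lemma inv_ρel_eq (R P E Y θ : ℝ) :
    (ρel R P E Y θ)⁻¹ = (1 + E * cos (θ - Y)) / P / R := by
  rw [ρel, inv_div, div_div, mul_comm P R]

lemma R_mul_Qθ_div {G M R : ℝ} (hG : G ≠ 0) (hM : M ≠ 0) (hR : R ≠ 0) (P E Y θ : ℝ) :
    R * Qθ G M R P E Y θ / (G * M) = 3 * ((1 + E * cos (θ - Y)) / P) ^ 3 * sin (2 * θ) := by
  rw [Qθ, (hasDerivAt_Wpot_angle ..).deriv, inv_ρel_eq]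
  field_simp

lemma R_sq_mul_Qρ_div {G M R P E : ℝ} (hG : G ≠ 0) (hM : M ≠ 0) (hR : R ≠ 0) (hP : P ≠ 0)
    {Y θ : ℝ} (hu : 1 + E * cos (θ - Y) ≠ 0) :
    R ^ 2 * Qρ G M R P E Y θ / (G * M)
      = 3 / 2 * ((1 + E * cos (θ - Y)) / P) ^ 4 * (1 + 3 * cos (2 * θ)) := by
  have hρ : ρel R P E Y θ ≠ 0 := div_ne_zero (mul_ne_zero hR hP) hu
  rw [Qρ, (hasDerivAt_Wpot_radius G M R θ hρ).deriv, inv_ρel_eq]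
  field_simp

lemma fP_eq (P E Y θ : ℝ) :
    fP P E Y θ = 12 * π / P * (1 + E * cos (θ - Y)) * sin (2 * θ) := by
  rw [fP, show θ + Y = 2 * θ - (θ - Y) by ring, show 3 * θ - Y = 2 * θ + (θ - Y) by ring]
  generalize θ - Y = α
  generalize 2 * θ = β
  simp only [sin_add, sin_sub]
  ring

lemma fE_eq (P E Y θ : ℝ) :
    fE P E Y θ = 3 * π / P ^ 2 *
      ((1 + E * cos (θ - Y)) ^ 2 * sin (θ - Y) * (1 + 3 * cos (2 * θ))
        + (1 + E * cos (θ - Y)) * (3 * E + 4 * cos (θ - Y) + E * cos (2 * θ - 2 * Y))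
          * sin (2 * θ)) := by
  rw [fE, show θ - 3 * Y = 3 * (θ - Y) - 2 * θ by ring, show θ + Y = 2 * θ - (θ - Y) by ring,
    show 2 * θ - 2 * Y = 2 * (θ - Y) by ring, show 3 * θ - 3 * Y = 3 * (θ - Y) by ring,
    show 3 * θ - Y = 2 * θ + (θ - Y) by ring, show 4 * θ - 2 * Y = 2 * θ + 2 * (θ - Y) by ring,
    show 5 * θ - 3 * Y = 2 * θ + 3 * (θ - Y) by ring]
  generalize θ - Y = α
  generalize 2 * θ = β
  simp only [sin_add, sin_sub, sin_two_mul, cos_two_mul, sin_three_mul_eq_sin_mul, cos_three_mul]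
  ring

lemma fY_eq (P : ℝ) {E : ℝ} (hE : E ≠ 0) (Y θ : ℝ) :
    fY P E Y θ = 3 * π / (E * P ^ 2) *
      (2 * (1 + E * cos (θ - Y)) * sin (θ - Y) * (2 + E * cos (θ - Y)) * sin (2 * θ)
        - (1 + E * cos (θ - Y)) ^ 2 * cos (θ - Y) * (1 + 3 * cos (2 * θ))) := by
  rw [fY, show θ - 3 * Y = 3 * (θ - Y) - 2 * θ by ring, show θ + Y = 2 * θ - (θ - Y) by ring,
    show 2 * θ - 2 * Y = 2 * (θ - Y) by ring, show 3 * θ - 3 * Y = 3 * (θ - Y) by ring,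
    show 3 * θ - Y = 2 * θ + (θ - Y) by ring, show 4 * θ - 2 * Y = 2 * θ + 2 * (θ - Y) by ring,
    show 5 * θ - 3 * Y = 2 * θ + 3 * (θ - Y) by ring]
  generalize θ - Y = α
  generalize 2 * θ = β
  simp only [cos_add, cos_sub, sin_two_mul, cos_two_mul, sin_three_mul_eq_sin_mul, cos_three_mul]
  field_simp
  ring

/-- The explicit form of the equations of motion for the Kepler elements in the
polar J₂ problem. -/
theorem stmt_16 (G M R P E Y θ : ℝ)
    (hG : 0 < G) (hM : 0 < M) (hR : 0 < R)
    (hP : 0 < P) (hE0 : 0 < E) (hE1 : E < 1) :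
    (4 * π * P ^ 2 / (1 + E * cos (θ - Y)) ^ 2) * (R * Qθ G M R P E Y θ / (G * M))
        = fP P E Y θ
    ∧ (2 * π * P ^ 2 * sin (θ - Y) / (1 + E * cos (θ - Y)) ^ 2) *
          (R ^ 2 * Qρ G M R P E Y θ / (G * M))
        + π * P * (3 * E + 4 * cos (θ - Y) + E * cos (2 * θ - 2 * Y)) /
            (1 + E * cos (θ - Y)) ^ 2 * (R * Qθ G M R P E Y θ / (G * M))
        = fE P E Y θ
    ∧ -(2 * π * P ^ 2 * cos (θ - Y) / (E * (1 + E * cos (θ - Y)) ^ 2)) *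
          (R ^ 2 * Qρ G M R P E Y θ / (G * M))
        + (2 * π * P * sin (θ - Y) * (2 + E * cos (θ - Y)) /
            (E * (1 + E * cos (θ - Y)) ^ 2)) * (R * Qθ G M R P E Y θ / (G * M))
        = fY P E Y θ := by
  have hu : 1 + E * cos (θ - Y) ≠ 0 :=
    (one_add_mul_cos_pos (abs_lt.mpr ⟨by linarith, hE1⟩) (θ - Y)).ne'
  rw [R_mul_Qθ_div hG.ne' hM.ne' hR.ne', R_sq_mul_Qρ_div hG.ne' hM.ne' hR.ne' hP.ne' hu,
    fP_eq, fE_eq, fY_eq P hE0.ne']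
  refine ⟨?_, ?_, ?_⟩ <;> field_simp <;> ring
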